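/- arXiv:1807.10069 — 7 statements merged into one kernel-verified Lean document; each statement's English description precedes it below -/
import Mathlib

section
/- On the 3×3 stencil, define the 8×5 matrix A with entries A_{jk} = ⟨φ_k⟩_{Ω_j} (j = 1,…,8, k = 1,…,5) and the vector b with b_j = ū_j − ū_0, for arbitrary real data ū_0,…,ū_8. Then the vector c = (c_1,…,c_5) given by c_1 = [(ū_3−ū_1)+(ū_5−ū_4)+(ū_8−ū_6)]/(6Δx), c_2 = [(ū_1−ū_6)+(ū_2−ū_7)+(ū_3−ū_8)]/(6Δy), c_3 = [(ū_1−2ū_2+ū_3)+3(ū_4−2ū_0+ū_5)+(ū_6−2ū_7+ū_8)]/(10Δx²), c_4 = [(ū_1−2ū_4+ū_6)+3(ū_2−2ū_0+ū_7)+(ū_3−2ū_5+ū_8)]/(10Δy²), c_5 = [(ū_3−ū_1)−(ū_8−ū_6)]/(4ΔxΔy) is the unique minimizer over ℝ⁵ of ‖Ac − b‖², i.e. it is the unique solution of the normal equations AᵀA c = Aᵀ b. -/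
open MeasureTheory intervalIntegral

/-- Cell average of `f` over the rectangle of size `dx × dy` centered at `(xc, yc)`. -/
noncomputable def cellAvg (xc yc dx dy : ℝ) (f : ℝ → ℝ → ℝ) : ℝ :=
  (dx * dy)⁻¹ *
    ∫ x in (xc - dx / 2)..(xc + dx / 2),
      ∫ y in (yc - dy / 2)..(yc + dy / 2), f x y

/-- Offsets (in units of `Δx`, `Δy`) of the centers of the cells `Ω_1, …, Ω_8`
of the 3×3 stencil with respect to the center `(x_0, y_0)` of `Ω_0`. -/
def off8 : Fin 8 → ℝ × ℝ :=
  ![(-1, 1), (0, 1), (1, 1), (-1, 0), (1, 0), (-1, -1), (0, -1), (1, -1)]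

/-- Basis polynomials `φ_1, …, φ_5` for the quadratic optimal polynomial. -/
noncomputable def phi5 (x0 y0 dx dy : ℝ) : Fin 5 → ℝ → ℝ → ℝ :=
  ![fun x _ => x - x0,
    fun _ y => y - y0,
    fun x _ => (x - x0) ^ 2 - dx ^ 2 / 12,
    fun _ y => (y - y0) ^ 2 - dy ^ 2 / 12,
    fun x y => (x - x0) * (y - y0)]

lemma int_lin (a x0 d : ℝ) :
    ∫ x in (a - d/2)..(a + d/2), (x - x0) = d * (a - x0) := by
  rw [show (∫ x in (a - d/2)..(a + d/2), (x - x0)) =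
      ∫ x in (a - d/2)..(a + d/2), (fun t => t) (x - x0) from rfl,
    integral_comp_sub_right (fun t => t) x0, integral_id]
  ring

lemma int_sq (a x0 d : ℝ) :
    ∫ x in (a - d/2)..(a + d/2), (x - x0)^2 = d * ((a - x0)^2 + d^2/12) := by
  rw [show (∫ x in (a - d/2)..(a + d/2), (x - x0)^2) =
      ∫ x in (a - d/2)..(a + d/2), (fun t => t^2) (x - x0) from rfl,
    integral_comp_sub_right (fun t => t^2) x0, integral_pow]
  ring

lemma avg1 (xc yc dx dy x0 : ℝ) (hdx : dx ≠ 0) (hdy : dy ≠ 0) :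
    cellAvg xc yc dx dy (fun x _ => x - x0) = xc - x0 := by
  unfold cellAvg
  simp only [intervalIntegral.integral_const, smul_eq_mul]
  rw [intervalIntegral.integral_const_mul, int_lin]
  field_simp
  ring

lemma avg2 (xc yc dx dy y0 : ℝ) (hdx : dx ≠ 0) (hdy : dy ≠ 0) :
    cellAvg xc yc dx dy (fun _ y => y - y0) = yc - y0 := by
  unfold cellAvg
  simp only [int_lin, intervalIntegral.integral_const, smul_eq_mul]
  field_simp
  ring

lemma avg3 (xc yc dx dy x0 e : ℝ) (hdx : dx ≠ 0) (hdy : dy ≠ 0) :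
    cellAvg xc yc dx dy (fun x _ => (x - x0)^2 - e) =
      (xc - x0)^2 + dx^2/12 - e := by
  unfold cellAvg
  simp only [intervalIntegral.integral_const, smul_eq_mul]
  rw [intervalIntegral.integral_const_mul]
  have h1 : IntervalIntegrable (fun x : ℝ => (x - x0)^2) volume (xc - dx/2) (xc + dx/2) :=
    (by continuity : Continuous fun x : ℝ => (x - x0)^2).intervalIntegrable _ _
  rw [intervalIntegral.integral_sub h1 intervalIntegrable_const, int_sq,
    intervalIntegral.integral_const]
  field_simp
  ring

lemma avg3' (xc yc dx dy y0 e : ℝ) (hdx : dx ≠ 0) (hdy : dy ≠ 0) :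
    cellAvg xc yc dx dy (fun _ y => (y - y0)^2 - e) =
      (yc - y0)^2 + dy^2/12 - e := by
  unfold cellAvg
  have h : (∫ y in (yc - dy/2)..(yc + dy/2), ((y - y0)^2 - e))
      = dy * ((yc - y0)^2 + dy^2/12) - dy * e := by
    have h1 : IntervalIntegrable (fun y : ℝ => (y - y0)^2) volume (yc - dy/2) (yc + dy/2) :=
      (by continuity : Continuous fun y : ℝ => (y - y0)^2).intervalIntegrable _ _
    rw [intervalIntegral.integral_sub h1 intervalIntegrable_const, int_sq,
      intervalIntegral.integral_const]
    simp [smul_eq_mul]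
  simp only [h, intervalIntegral.integral_const, smul_eq_mul]
  field_simp
  ring

lemma avg4 (xc yc dx dy x0 y0 : ℝ) (hdx : dx ≠ 0) (hdy : dy ≠ 0) :
    cellAvg xc yc dx dy (fun x y => (x - x0) * (y - y0)) =
      (xc - x0) * (yc - y0) := by
  unfold cellAvg
  have h : ∀ x : ℝ, (∫ y in (yc - dy/2)..(yc + dy/2), (x - x0) * (y - y0))
      = (x - x0) * (dy * (yc - y0)) := by
    intro x
    rw [intervalIntegral.integral_const_mul, int_lin]
  simp only [h]
  rw [intervalIntegral.integral_mul_const, int_lin]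
  field_simp

set_option maxHeartbeats 1600000 in
/-- the explicit coefficients `c_1, …, c_5` of the third-order CWENO
optimal polynomial are the unique minimizer of the least-squares functional
`‖Ac − b‖²` with `A_{jk} = ⟨φ_k⟩_{Ω_j}` and `b_j = ū_j − ū_0`, `j = 1, …, 8`. -/
theorem cweno3_optimal_polynomial_least_squares
    (x0 y0 dx dy : ℝ) (hdx : 0 < dx) (hdy : 0 < dy) (u : Fin 9 → ℝ) :
    let A : Fin 8 → Fin 5 → ℝ := fun j k =>
      cellAvg (x0 + (off8 j).1 * dx) (y0 + (off8 j).2 * dy) dx dy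
        (phi5 x0 y0 dx dy k)
    let b : Fin 8 → ℝ := fun j => u j.succ - u 0
    let Φ : (Fin 5 → ℝ) → ℝ := fun cc => ∑ j, (∑ k, cc k * A j k - b j) ^ 2
    let c : Fin 5 → ℝ :=
      ![(1 / (6 * dx)) * ((u 3 - u 1) + (u 5 - u 4) + (u 8 - u 6)),
        (1 / (6 * dy)) * ((u 1 - u 6) + (u 2 - u 7) + (u 3 - u 8)),
        (1 / (10 * dx ^ 2)) *
          ((u 1 - 2 * u 2 + u 3) + 3 * (u 4 - 2 * u 0 + u 5) +
            (u 6 - 2 * u 7 + u 8)),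
        (1 / (10 * dy ^ 2)) *
          ((u 1 - 2 * u 4 + u 6) + 3 * (u 2 - 2 * u 0 + u 7) +
            (u 3 - 2 * u 5 + u 8)),
        (1 / (4 * dx * dy)) * ((u 3 - u 1) - (u 8 - u 6))]
    ∀ c' : Fin 5 → ℝ, c' ≠ c → Φ c < Φ c' := by
  intro A b Φ c c' hne
  have hdx' : dx ≠ 0 := ne_of_gt hdx
  have hdy' : dy ≠ 0 := ne_of_gt hdy
  -- values of the matrix A
  have hA0 : ∀ j : Fin 8, A j 0 = (off8 j).1 * dx := by
    intro j
    show cellAvg _ _ _ _ (phi5 x0 y0 dx dy 0) = _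
    rw [show phi5 x0 y0 dx dy 0 = fun x _ => x - x0 from rfl,
      avg1 _ _ _ _ _ hdx' hdy']
    ring
  have hA1 : ∀ j : Fin 8, A j 1 = (off8 j).2 * dy := by
    intro j
    show cellAvg _ _ _ _ (phi5 x0 y0 dx dy 1) = _
    rw [show phi5 x0 y0 dx dy 1 = fun _ y => y - y0 from rfl,
      avg2 _ _ _ _ _ hdx' hdy']
    ring
  have hA2 : ∀ j : Fin 8, A j 2 = ((off8 j).1 * dx) ^ 2 := by
    intro j
    show cellAvg _ _ _ _ (phi5 x0 y0 dx dy 2) = _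
    rw [show phi5 x0 y0 dx dy 2 = fun x _ => (x - x0) ^ 2 - dx ^ 2 / 12 from rfl,
      avg3 _ _ _ _ _ _ hdx' hdy']
    ring
  have hA3 : ∀ j : Fin 8, A j 3 = ((off8 j).2 * dy) ^ 2 := by
    intro j
    show cellAvg _ _ _ _ (phi5 x0 y0 dx dy 3) = _
    rw [show phi5 x0 y0 dx dy 3 = fun _ y => (y - y0) ^ 2 - dy ^ 2 / 12 from rfl,
      avg3' _ _ _ _ _ _ hdx' hdy']
    ring
  have hA4 : ∀ j : Fin 8, A j 4 = ((off8 j).1 * dx) * ((off8 j).2 * dy) := by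
    intro j
    show cellAvg _ _ _ _ (phi5 x0 y0 dx dy 4) = _
    rw [show phi5 x0 y0 dx dy 4 = fun x y => (x - x0) * (y - y0) from rfl,
      avg4 _ _ _ _ _ _ hdx' hdy']
    ring
  have o0 : off8 0 = (-1, 1) := rfl
  have o1 : off8 1 = (0, 1) := rfl
  have o2 : off8 2 = (1, 1) := rfl
  have o3 : off8 3 = (-1, 0) := rfl
  have o4 : off8 4 = (1, 0) := rfl
  have o5 : off8 5 = (-1, -1) := rfl
  have o6 : off8 6 = (0, -1) := rfl
  have o7 : off8 7 = (1, -1) := rfl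
  have s0 : (0 : Fin 8).succ = 1 := rfl
  have s1 : (1 : Fin 8).succ = 2 := rfl
  have s2 : (2 : Fin 8).succ = 3 := rfl
  have s3 : (3 : Fin 8).succ = 4 := rfl
  have s4 : (4 : Fin 8).succ = 5 := rfl
  have s5 : (5 : Fin 8).succ = 6 := rfl
  have s6 : (6 : Fin 8).succ = 7 := rfl
  have s7 : (7 : Fin 8).succ = 8 := rfl
  have hc0 : c 0 = (1 / (6 * dx)) * ((u 3 - u 1) + (u 5 - u 4) + (u 8 - u 6)) := rfl
  have hc1 : c 1 = (1 / (6 * dy)) * ((u 1 - u 6) + (u 2 - u 7) + (u 3 - u 8)) := rfl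
  have hc2 : c 2 = (1 / (10 * dx ^ 2)) *
      ((u 1 - 2 * u 2 + u 3) + 3 * (u 4 - 2 * u 0 + u 5) + (u 6 - 2 * u 7 + u 8)) := rfl
  have hc3 : c 3 = (1 / (10 * dy ^ 2)) *
      ((u 1 - 2 * u 4 + u 6) + 3 * (u 2 - 2 * u 0 + u 7) + (u 3 - 2 * u 5 + u 8)) := rfl
  have hc4 : c 4 = (1 / (4 * dx * dy)) * ((u 3 - u 1) - (u 8 - u 6)) := rfl
  have hΦ : ∀ cc : Fin 5 → ℝ, Φ cc =
      (cc 0 * (-dx) + cc 1 * dy + cc 2 * dx^2 + cc 3 * dy^2 + cc 4 * (-(dx*dy)) - (u 1 - u 0))^2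
      + (cc 1 * dy + cc 3 * dy^2 - (u 2 - u 0))^2
      + (cc 0 * dx + cc 1 * dy + cc 2 * dx^2 + cc 3 * dy^2 + cc 4 * (dx*dy) - (u 3 - u 0))^2
      + (cc 0 * (-dx) + cc 2 * dx^2 - (u 4 - u 0))^2
      + (cc 0 * dx + cc 2 * dx^2 - (u 5 - u 0))^2
      + (cc 0 * (-dx) + cc 1 * (-dy) + cc 2 * dx^2 + cc 3 * dy^2 + cc 4 * (dx*dy) - (u 6 - u 0))^2
      + (cc 1 * (-dy) + cc 3 * dy^2 - (u 7 - u 0))^2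
      + (cc 0 * dx + cc 1 * (-dy) + cc 2 * dx^2 + cc 3 * dy^2 + cc 4 * (-(dx*dy)) - (u 8 - u 0))^2 := by
    intro cc
    simp only [Φ, b, Fin.sum_univ_eight, Fin.sum_univ_five, hA0, hA1, hA2, hA3, hA4,
      o0, o1, o2, o3, o4, o5, o6, o7, s0, s1, s2, s3, s4, s5, s6, s7]
    ring
  have key : Φ c' = Φ c +
      (6*(dx*(c' 0 - c 0))^2 + 6*(dy*(c' 1 - c 1))^2
        + 2*(dx^2*(c' 2 - c 2))^2 + 2*(dy^2*(c' 3 - c 3))^2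
        + 4*(dx^2*(c' 2 - c 2) + dy^2*(c' 3 - c 3))^2
        + 4*(dx*dy*(c' 4 - c 4))^2) := by
    rw [hΦ c', hΦ c, hc0, hc1, hc2, hc3, hc4]
    field_simp
    ring
  rw [key]
  have hQ : 0 < 6*(dx*(c' 0 - c 0))^2 + 6*(dy*(c' 1 - c 1))^2
        + 2*(dx^2*(c' 2 - c 2))^2 + 2*(dy^2*(c' 3 - c 3))^2
        + 4*(dx^2*(c' 2 - c 2) + dy^2*(c' 3 - c 3))^2
        + 4*(dx*dy*(c' 4 - c 4))^2 := by
    rw [Function.ne_iff] at hne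
    obtain ⟨k, hk⟩ := hne
    have hsub : ∀ i : Fin 5, c' i ≠ c i → c' i - c i ≠ 0 := fun i h => sub_ne_zero.mpr h
    fin_cases k
    · have h := sq_pos_of_ne_zero (mul_ne_zero hdx' (hsub 0 hk))
      nlinarith [sq_nonneg (dy*(c' 1 - c 1)), sq_nonneg (dx^2*(c' 2 - c 2)),
        sq_nonneg (dy^2*(c' 3 - c 3)), sq_nonneg (dx^2*(c' 2 - c 2) + dy^2*(c' 3 - c 3)),
        sq_nonneg (dx*dy*(c' 4 - c 4))]
    · have h := sq_pos_of_ne_zero (mul_ne_zero hdy' (hsub 1 hk))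
      nlinarith [sq_nonneg (dx*(c' 0 - c 0)), sq_nonneg (dx^2*(c' 2 - c 2)),
        sq_nonneg (dy^2*(c' 3 - c 3)), sq_nonneg (dx^2*(c' 2 - c 2) + dy^2*(c' 3 - c 3)),
        sq_nonneg (dx*dy*(c' 4 - c 4))]
    · have h := sq_pos_of_ne_zero (mul_ne_zero (pow_ne_zero 2 hdx') (hsub 2 hk))
      nlinarith [sq_nonneg (dx*(c' 0 - c 0)), sq_nonneg (dy*(c' 1 - c 1)),
        sq_nonneg (dy^2*(c' 3 - c 3)), sq_nonneg (dx^2*(c' 2 - c 2) + dy^2*(c' 3 - c 3)),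
        sq_nonneg (dx*dy*(c' 4 - c 4))]
    · have h := sq_pos_of_ne_zero (mul_ne_zero (pow_ne_zero 2 hdy') (hsub 3 hk))
      nlinarith [sq_nonneg (dx*(c' 0 - c 0)), sq_nonneg (dy*(c' 1 - c 1)),
        sq_nonneg (dx^2*(c' 2 - c 2)), sq_nonneg (dx^2*(c' 2 - c 2) + dy^2*(c' 3 - c 3)),
        sq_nonneg (dx*dy*(c' 4 - c 4))]
    · have h := sq_pos_of_ne_zero (mul_ne_zero (mul_ne_zero hdx' hdy') (hsub 4 hk))
      nlinarith [sq_nonneg (dx*(c' 0 - c 0)), sq_nonneg (dy*(c' 1 - c 1)),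
        sq_nonneg (dx^2*(c' 2 - c 2)), sq_nonneg (dy^2*(c' 3 - c 3)),
        sq_nonneg (dx^2*(c' 2 - c 2) + dy^2*(c' 3 - c 3))]
  linarith
end

section
/- Suppose the data ū_0,…,ū_8 are the exact cell averages of a polynomial u of degree at most 2, i.e. ū_j = ⟨u⟩_{Ω_j} for j = 0,…,8 on the 3×3 stencil. Then the optimal polynomial P_opt = ū_0 + Σ_{k=1}^5 c_k φ_k, where c = (c_1,…,c_5) is the least-squares solution of Σ_k c_k ⟨φ_k⟩_{Ω_j} = ū_j − ū_0 (j = 1,…,8), coincides with u: P_opt(x,y) = u(x,y) for all (x,y). -/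
open MeasureTheory intervalIntegral

/-- Offsets (in units of `Δx`, `Δy`) of the centers of the cells `Ω_0, Ω_1, …, Ω_8`
of the 3×3 stencil with respect to `(x_0, y_0)`. -/
def off9 : Fin 9 → ℝ × ℝ :=
  ![(0, 0), (-1, 1), (0, 1), (1, 1), (-1, 0), (1, 0), (-1, -1), (0, -1), (1, -1)]

/-! Averaging over an interval of length h centred at c fixes affine functions and sends
(t - t₀)² to (c - t₀)² + h²/12. Hence the cell average of each φₖ over the neighbour whose
centre is offset by (X, Y) is just the k-th monomial of X, Y, X², Y², XY, and ū_j - ū₀ is the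
same combination of these monomials with the coefficients a₁, …, a₅ of u. So the true
coefficients fit the data exactly and every least-squares minimiser must fit it exactly too.
The equations of the E, W, N, S and NE cells already pin down the five coefficients, so
c = (a₁, …, a₅), and then ū₀ = a₀ + a₃ Δx²/12 + a₄ Δy²/12 makes P_opt equal to u. -/

theorem integral_centered_quadratic (C₀ C₁ C₂ y₀ yc h : ℝ) :
    ∫ y in (yc - h / 2)..(yc + h / 2), (C₀ + C₁ * (y - y₀) + C₂ * (y - y₀) ^ 2) =
      h * (C₀ + C₁ * (yc - y₀) + C₂ * ((yc - y₀) ^ 2 + h ^ 2 / 12)) := by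
  have hderiv : ∀ y : ℝ, HasDerivAt
      (fun y => C₀ * (y - y₀) + C₁ * (y - y₀) ^ 2 / 2 + C₂ * (y - y₀) ^ 3 / 3)
      (C₀ + C₁ * (y - y₀) + C₂ * (y - y₀) ^ 2) y := fun y => by
    have h := (hasDerivAt_id' y).sub_const y₀
    exact (((h.const_mul C₀).fun_add (((h.fun_pow 2).const_mul C₁).div_const 2)).fun_add
      (((h.fun_pow 3).const_mul C₂).div_const 3)).congr_deriv (by norm_num; ring)
  rw [integral_eq_sub_of_hasDerivAt (fun y _ => hderiv y)
    (Continuous.intervalIntegrable (by fun_prop) _ _)]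
  ring

theorem cellAvg_quadratic (x₀ y₀ X Y dx dy a₀ a₁ a₂ a₃ a₄ a₅ : ℝ) (hdx : dx ≠ 0)
    (hdy : dy ≠ 0) :
    cellAvg (x₀ + X) (y₀ + Y) dx dy (fun x y =>
        a₀ + a₁ * (x - x₀) + a₂ * (y - y₀) + a₃ * (x - x₀) ^ 2 +
          a₄ * (y - y₀) ^ 2 + a₅ * ((x - x₀) * (y - y₀))) =
      a₀ + a₁ * X + a₂ * Y + a₃ * (X ^ 2 + dx ^ 2 / 12) + a₄ * (Y ^ 2 + dy ^ 2 / 12) +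
        a₅ * (X * Y) := by
  have hinner : ∀ x : ℝ,
      ∫ y in (y₀ + Y - dy / 2)..(y₀ + Y + dy / 2),
        (a₀ + a₁ * (x - x₀) + a₂ * (y - y₀) + a₃ * (x - x₀) ^ 2 +
          a₄ * (y - y₀) ^ 2 + a₅ * ((x - x₀) * (y - y₀))) =
      dy * (a₀ + a₂ * Y + a₄ * (Y ^ 2 + dy ^ 2 / 12)) + dy * (a₁ + a₅ * Y) * (x - x₀) +
        dy * a₃ * (x - x₀) ^ 2 := fun x => by
    calc _ = ∫ y in (y₀ + Y - dy / 2)..(y₀ + Y + dy / 2),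
          ((a₀ + a₁ * (x - x₀) + a₃ * (x - x₀) ^ 2) + (a₂ + a₅ * (x - x₀)) * (y - y₀) +
            a₄ * (y - y₀) ^ 2) := by
          congr 1; funext y; ring
      _ = _ := by rw [integral_centered_quadratic]; ring
  unfold cellAvg
  simp only [hinner, integral_centered_quadratic]
  field_simp
  ring

def quadMonomials (X Y : ℝ) : Fin 5 → ℝ := ![X, Y, X ^ 2, Y ^ 2, X * Y]

theorem cellAvg_phi5 (x₀ y₀ X Y dx dy : ℝ) (hdx : dx ≠ 0) (hdy : dy ≠ 0) (k : Fin 5) :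
    cellAvg (x₀ + X) (y₀ + Y) dx dy (phi5 x₀ y₀ dx dy k) = quadMonomials X Y k := by
  have h := cellAvg_quadratic x₀ y₀ X Y dx dy (hdx := hdx) (hdy := hdy)
  fin_cases k
  · simpa [phi5, quadMonomials] using h 0 1 0 0 0 0
  · simpa [phi5, quadMonomials] using h 0 0 1 0 0 0
  · convert h (-(dx ^ 2 / 12)) 0 0 1 0 0 using 2
    · funext x y; simp only [phi5, Fin.reduceFinMk, Matrix.cons_val]; ring
    · simp [quadMonomials]
  · convert h (-(dy ^ 2 / 12)) 0 0 0 1 0 using 2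
    · funext x y; simp only [phi5, Fin.reduceFinMk, Matrix.cons_val]; ring
    · simp [quadMonomials]
  · simpa [phi5, quadMonomials] using h 0 0 0 0 0 1

theorem eq_zero_of_sum_quadMonomials_stencil_eq_zero (dx dy : ℝ) (hdx : dx ≠ 0) (hdy : dy ≠ 0)
    (d : Fin 5 → ℝ)
    (hd : ∀ j : Fin 8,
      ∑ k, d k * quadMonomials ((off9 j.succ).1 * dx) ((off9 j.succ).2 * dy) k = 0) :
    d = 0 := by
  have hW := hd 3; have hE := hd 4; have hN := hd 1; have hS := hd 6; have hNE := hd 2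
  simp only [Fin.sum_univ_five, quadMonomials, off9, Fin.succ_one_eq_two, Fin.reduceSucc,
    Matrix.cons_val, Matrix.cons_val_zero, Matrix.cons_val_one] at hE hW hN hS hNE
  have h0 : d 0 = 0 := by
    have : d 0 * dx = 0 := by linear_combination (hE - hW) / 2
    simpa [hdx] using this
  have h1 : d 1 = 0 := by
    have : d 1 * dy = 0 := by linear_combination (hN - hS) / 2
    simpa [hdy] using this
  have h2 : d 2 = 0 := by
    have : d 2 * dx ^ 2 = 0 := by linear_combination (hW + hE) / 2
    simpa [hdx] using this
  have h3 : d 3 = 0 := by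
    have : d 3 * dy ^ 2 = 0 := by linear_combination (hN + hS) / 2
    simpa [hdy] using this
  have h4 : d 4 = 0 := by
    have : d 4 * (dx * dy) = 0 := by
      linear_combination hNE - dx * h0 - dy * h1 - dx ^ 2 * h2 - dy ^ 2 * h3
    simpa [hdx, hdy] using this
  ext k; fin_cases k <;> assumption

theorem eq_zero_of_forall_sum_sq_le {α ι : Type*} [Fintype ι] (r : α → ι → ℝ) {c c₀ : α}
    (hc : ∀ c', ∑ j, r c j ^ 2 ≤ ∑ j, r c' j ^ 2) (hc₀ : ∀ j, r c₀ j = 0) (j : ι) :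
    r c j = 0 := by
  have hsum : ∑ j, r c j ^ 2 = 0 :=
    le_antisymm ((hc c₀).trans_eq (by simp [hc₀])) (by positivity)
  exact pow_eq_zero_iff two_ne_zero |>.mp <|
    (Finset.sum_eq_zero_iff_of_nonneg fun i _ => sq_nonneg (r c i)).mp hsum j (Finset.mem_univ j)

/-- if the data `ū_0, …, ū_8` are the exact cell averages of a
bivariate polynomial `u` of degree at most 2 on the 3×3 stencil, then the
optimal polynomial `P_opt = ū_0 + ∑_k c_k φ_k` built from the least-squares
coefficients `c` reproduces `u` exactly. -/
theorem cweno3_optimal_polynomial_exact_on_quadratics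
    (x0 y0 dx dy : ℝ) (hdx : 0 < dx) (hdy : 0 < dy) (a : Fin 6 → ℝ) :
    let uu : ℝ → ℝ → ℝ := fun x y =>
      a 0 + a 1 * (x - x0) + a 2 * (y - y0) + a 3 * (x - x0) ^ 2 +
        a 4 * (y - y0) ^ 2 + a 5 * ((x - x0) * (y - y0))
    let ubar : Fin 9 → ℝ := fun j =>
      cellAvg (x0 + (off9 j).1 * dx) (y0 + (off9 j).2 * dy) dx dy uu
    let A : Fin 8 → Fin 5 → ℝ := fun j k =>
      cellAvg (x0 + (off9 j.succ).1 * dx) (y0 + (off9 j.succ).2 * dy) dx dy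
        (phi5 x0 y0 dx dy k)
    let Φ : (Fin 5 → ℝ) → ℝ := fun cc =>
      ∑ j, (∑ k, cc k * A j k - (ubar j.succ - ubar 0)) ^ 2
    ∀ c : Fin 5 → ℝ, (∀ c' : Fin 5 → ℝ, Φ c ≤ Φ c') →
      ∀ x y : ℝ, ubar 0 + ∑ k, c k * phi5 x0 y0 dx dy k x y = uu x y := by
  intro uu ubar A Φ c hmin x y
  set M : Fin 8 → Fin 5 → ℝ := fun j =>
    quadMonomials ((off9 j.succ).1 * dx) ((off9 j.succ).2 * dy)
  have hubar (j : Fin 9) : ubar j = a 0 + a 1 * ((off9 j).1 * dx) + a 2 * ((off9 j).2 * dy) +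
      a 3 * (((off9 j).1 * dx) ^ 2 + dx ^ 2 / 12) + a 4 * (((off9 j).2 * dy) ^ 2 + dy ^ 2 / 12) +
      a 5 * ((off9 j).1 * dx * ((off9 j).2 * dy)) :=
    cellAvg_quadratic x0 y0 _ _ dx dy _ _ _ _ _ _ hdx.ne' hdy.ne'
  have hubar0 : ubar 0 = a 0 + a 3 * (dx ^ 2 / 12) + a 4 * (dy ^ 2 / 12) := by
    simp [hubar, off9]
  have hA (j : Fin 8) (k : Fin 5) : A j k = M j k :=
    cellAvg_phi5 x0 y0 _ _ dx dy hdx.ne' hdy.ne' k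
  have hresidual (c' : Fin 5 → ℝ) (j : Fin 8) :
      ∑ k, c' k * A j k - (ubar j.succ - ubar 0) = ∑ k, (c' k - a k.succ) * M j k := by
    simp only [hA, hubar j.succ, hubar0, M, quadMonomials, Fin.sum_univ_five, Matrix.cons_val_zero,
      Matrix.cons_val_one, Matrix.cons_val, Fin.succ_zero_eq_one, Fin.succ_one_eq_two,
      Fin.reduceSucc]
    ring
  have hc : c = fun k => a k.succ := by
    refine sub_eq_zero.mp (eq_zero_of_sum_quadMonomials_stencil_eq_zero dx dy hdx.ne' hdy.ne' _
      fun j => ?_)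
    refine eq_zero_of_forall_sum_sq_le
      (fun (c' : Fin 5 → ℝ) j => ∑ k, (c' k - a k.succ) * M j k) (c₀ := fun k => a k.succ)
      (fun c' => ?_) (fun j => by simp) j
    simpa only [Φ, hresidual] using hmin c'
  subst hc
  simp only [hubar0, uu, phi5, Fin.sum_univ_five, Matrix.cons_val_zero, Matrix.cons_val_one,
    Matrix.cons_val, Fin.succ_zero_eq_one, Fin.succ_one_eq_two, Fin.reduceSucc]
  ring
end

section
/- Fix R > 0, g > 0, a constant η̄ ∈ ℝ, and a differentiable bottom depth H(θ,φ). On a domain where σ = cos(φ) > 0, set η_σ = η̄ cos(φ), h_σ = η_σ + H_σ with H_σ = H cos(φ), assume h_σ > 0, and set Q_θ ≡ 0, Q_φ ≡ 0. Then (h_σ, Q_θ, Q_φ) is a stationary solution of the shallow water system on the sphere: ∂_t h_σ + (1/R)(∂_θ(Q_θ/σ) + ∂_φ Q_φ) = 0; ∂_t Q_θ + (1/R)∂_θ(Q_θ²/(h_σ σ)) + (1/R)∂_φ(Q_θ Q_φ/h_σ) + (Q_θ Q_φ/(R h_σ σ))∂_φ σ + (g h_σ/(R σ²))∂_θ η_σ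 = 0; ∂_t Q_φ + (1/R)∂_θ(Q_φ Q_θ/(h_σ σ)) + (1/R)∂_φ(Q_φ²/h_σ) − (Q_θ²/(R h_σ σ) + g h_σ η_σ/(R σ²))∂_φ σ + (g h_σ/(R σ))∂_φ η_σ = 0. -/
/-! Water at rest is stationary because every flux term vanishes with `Q_θ = Q_φ = 0`, and the
only surviving terms, the two pressure-gradient contributions to the `φ`-momentum equation,
cancel: `η_σ = η̄ σ` makes `η_σ / σ` constant, so `∂_φ η_σ = (η_σ / σ) ∂_φ σ`. -/

theorem hydrostatic_balance (σ : ℝ → ℝ) (φ ηbar g h R : ℝ) (hσ : σ φ ≠ 0) :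
    g * h * (ηbar * σ φ) / (R * σ φ ^ 2) * deriv σ φ =
      g * h / (R * σ φ) * deriv (fun φ' => ηbar * σ φ') φ := by
  rw [deriv_const_mul_field']
  field_simp

theorem water_at_rest_on_sphere_is_stationary_solution_general
    (R g ηbar : ℝ) (H : ℝ → ℝ → ℝ) :
    let ησ : ℝ → ℝ := fun φ => ηbar * Real.cos φ
    let hσ : ℝ → ℝ → ℝ → ℝ := fun θ φ _t =>
      ηbar * Real.cos φ + H θ φ * Real.cos φ
    let Qθ : ℝ → ℝ → ℝ → ℝ := fun _ _ _ => 0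
    let Qφ : ℝ → ℝ → ℝ → ℝ := fun _ _ _ => 0
    ∀ θ φ t : ℝ, 0 < Real.cos φ → 0 < hσ θ φ t →
      -- mass equation
      (deriv (fun t' => hσ θ φ t') t +
          (1 / R) * (deriv (fun θ' => Qθ θ' φ t / Real.cos φ) θ +
            deriv (fun φ' => Qφ θ φ' t) φ) = 0) ∧
      -- θ-momentum equation
      (deriv (fun t' => Qθ θ φ t') t +
          (1 / R) * deriv (fun θ' =>
            (Qθ θ' φ t) ^ 2 / (hσ θ' φ t * Real.cos φ)) θ +
          (1 / R) * deriv (fun φ' =>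
            Qθ θ φ' t * Qφ θ φ' t / hσ θ φ' t) φ +
          (Qθ θ φ t * Qφ θ φ t / (R * hσ θ φ t * Real.cos φ)) *
            deriv (fun φ' => Real.cos φ') φ +
          (g * hσ θ φ t / (R * (Real.cos φ) ^ 2)) *
            deriv (fun _θ' : ℝ => ησ φ) θ = 0) ∧
      -- φ-momentum equation
      (deriv (fun t' => Qφ θ φ t') t +
          (1 / R) * deriv (fun θ' =>
            Qφ θ' φ t * Qθ θ' φ t / (hσ θ' φ t * Real.cos φ)) θ +
          (1 / R) * deriv (fun φ' => (Qφ θ φ' t) ^ 2 / hσ θ φ' t) φ -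
          ((Qθ θ φ t) ^ 2 / (R * hσ θ φ t * Real.cos φ) +
              g * hσ θ φ t * ησ φ / (R * (Real.cos φ) ^ 2)) *
            deriv (fun φ' => Real.cos φ') φ +
          (g * hσ θ φ t / (R * Real.cos φ)) *
            deriv (fun φ' => ησ φ') φ = 0) := by
  intro ησ hσ Qθ Qφ θ φ t hcos _
  have balance := hydrostatic_balance Real.cos φ ηbar g (hσ θ φ t) R hcos.ne'
  refine ⟨?mass, ?momentum_θ, ?momentum_φ⟩
  case mass => simp [hσ, Qθ, Qφ]
  case momentum_θ => simp [Qθ, Qφ, ησ]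
  case momentum_φ =>
    simp only [Qθ, Qφ, ησ, deriv_const', ne_eq, OfNat.ofNat_ne_zero, not_false_eq_true,
      zero_pow, zero_div, mul_zero, zero_add]
    rw [← balance]
    ring

/-- the water-at-rest state `η_σ = η̄ cos φ`, `Q_θ = Q_φ = 0`
(with `h_σ = η_σ + H_σ`, `H_σ = H cos φ`) is a stationary solution of the
shallow water system on the sphere, at every point where `σ = cos φ > 0`
and `h_σ > 0`. -/
theorem water_at_rest_on_sphere_is_stationary_solution
    (R g ηbar : ℝ) (hR : 0 < R) (hg : 0 < g) (H : ℝ → ℝ → ℝ)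
    (hH : ∀ θ φ : ℝ,
      DifferentiableAt ℝ (fun θ' => H θ' φ) θ ∧
      DifferentiableAt ℝ (fun φ' => H θ φ') φ) :
    let ησ : ℝ → ℝ := fun φ => ηbar * Real.cos φ
    let hσ : ℝ → ℝ → ℝ → ℝ := fun θ φ _t =>
      ηbar * Real.cos φ + H θ φ * Real.cos φ
    let Qθ : ℝ → ℝ → ℝ → ℝ := fun _ _ _ => 0
    let Qφ : ℝ → ℝ → ℝ → ℝ := fun _ _ _ => 0
    ∀ θ φ t : ℝ, 0 < Real.cos φ → 0 < hσ θ φ t →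
      -- mass equation
      (deriv (fun t' => hσ θ φ t') t +
          (1 / R) * (deriv (fun θ' => Qθ θ' φ t / Real.cos φ) θ +
            deriv (fun φ' => Qφ θ φ' t) φ) = 0) ∧
      -- θ-momentum equation
      (deriv (fun t' => Qθ θ φ t') t +
          (1 / R) * deriv (fun θ' =>
            (Qθ θ' φ t) ^ 2 / (hσ θ' φ t * Real.cos φ)) θ +
          (1 / R) * deriv (fun φ' =>
            Qθ θ φ' t * Qφ θ φ' t / hσ θ φ' t) φ +
          (Qθ θ φ t * Qφ θ φ t / (R * hσ θ φ t * Real.cos φ)) *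
            deriv (fun φ' => Real.cos φ') φ +
          (g * hσ θ φ t / (R * (Real.cos φ) ^ 2)) *
            deriv (fun _θ' : ℝ => ησ φ) θ = 0) ∧
      -- φ-momentum equation
      (deriv (fun t' => Qφ θ φ t') t +
          (1 / R) * deriv (fun θ' =>
            Qφ θ' φ t * Qθ θ' φ t / (hσ θ' φ t * Real.cos φ)) θ +
          (1 / R) * deriv (fun φ' => (Qφ θ φ' t) ^ 2 / hσ θ φ' t) φ -
          ((Qθ θ φ t) ^ 2 / (R * hσ θ φ t * Real.cos φ) +
              g * hσ θ φ t * ησ φ / (R * (Real.cos φ) ^ 2)) *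
            deriv (fun φ' => Real.cos φ') φ +
          (g * hσ θ φ t / (R * Real.cos φ)) *
            deriv (fun φ' => ησ φ') φ = 0) :=
  water_at_rest_on_sphere_is_stationary_solution_general R g ηbar H
end

section
/- Let g > 0, η̄ ∈ ℝ, and let h_σ(θ,φ) be any function. With σ = cos(φ) > 0, T_θ^p = (0, g h_σ/σ², 0)ᵀ, T_φ^p = (0, 0, g h_σ/σ)ᵀ and G_φ²(h_σ, η_σ, σ) = (0, 0, −g h_σ η_σ/σ²)ᵀ, the following identity holds at every point when η_σ = η̄ cos(φ): T_θ^p ∂_θ(η̄ cos(φ)) + T_φ^p ∂_φ(η̄ cos(φ)) + G_φ²(h_σ, η̄ cos(φ), σ) ∂_φ cos(φ) = 0 (as a vector identity in ℝ³). -/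
/-- the well-balancing identity
`T_θ^p ∂_θ(η̄ cos φ) + T_φ^p ∂_φ(η̄ cos φ) + G_φ²(h_σ, η̄ cos φ, σ) ∂_φ cos φ = 0`
holds (as a vector identity in ℝ³) at every point where `σ = cos φ > 0`,
where `T_θ^p = (0, g h_σ/σ², 0)ᵀ`, `T_φ^p = (0, 0, g h_σ/σ)ᵀ` and
`G_φ² = (0, 0, −g h_σ η_σ/σ²)ᵀ`. -/
theorem well_balancing_identity_on_sphere
    (g ηbar : ℝ) (hg : 0 < g) (hσ : ℝ → ℝ → ℝ) :
    ∀ θ φ : ℝ, 0 < Real.cos φ →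
      (deriv (fun _θ' : ℝ => ηbar * Real.cos φ) θ) •
          (![0, g * hσ θ φ / (Real.cos φ) ^ 2, 0] : Fin 3 → ℝ) +
        (deriv (fun φ' => ηbar * Real.cos φ') φ) •
          (![0, 0, g * hσ θ φ / Real.cos φ] : Fin 3 → ℝ) +
        (deriv (fun φ' => Real.cos φ') φ) •
          (![0, 0, -(g * hσ θ φ * (ηbar * Real.cos φ)) / (Real.cos φ) ^ 2] :
            Fin 3 → ℝ) = 0 := by
  intro θ φ hc
  have h1 : deriv (fun _θ' : ℝ => ηbar * Real.cos φ) θ = 0 := deriv_const _ _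
  have h2 : deriv (fun φ' => ηbar * Real.cos φ') φ = ηbar * (-Real.sin φ) := by
    simp [Real.deriv_cos]
  have h3 : deriv (fun φ' => Real.cos φ') φ = -Real.sin φ := Real.deriv_cos
  rw [h1, h2, h3]
  funext i
  fin_cases i <;>
    simp [Matrix.cons_val_zero, Matrix.cons_val_one] <;>
    field_simp <;> ring
end

section
/- Let σ > 0, h_σ > 0, Q_θ, Q_φ ∈ ℝ, and let n = (n_θ, n_φ) be a unit vector in ℝ². Define δ = √(n_θ²/σ² + n_φ²), ν = (n_θ/(σδ), n_φ/δ), the rotation matrix R_ν = [[1,0,0],[0,ν_θ,ν_φ],[0,−ν_φ,ν_θ]], the fluxes F_θ(W) = (Q_θ/σ, Q_θ²/(h_σ σ), Q_φ Q_θ/(h_σ σ))ᵀ and F_φ(w) = (Q_φ, Q_θ Q_φ/h_σ, Q_φ²/h_σ)ᵀ, F_n(W) = n_θ F_θ(W) + n_φ F_φ(w), and for a state U_σ = (h_σ, Q_ν, Q_{ν⊥})ᵀ the one-dimensional flux F(U_σ) = (Q_ν, Q_ν²/h_σ, Q_ν Q_{ν⊥}/h_σ)ᵀ. Then, with w = (h_σ,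 Q_θ, Q_φ)ᵀ, the rotational-invariance identity R_ν F_n(W) = δ F(R_ν w) holds. -/
set_option maxHeartbeats 1000000


/-- rotational-invariance identity `R_ν F_n(W) = δ F(R_ν w)` for
the advective fluxes of the shallow water system on the sphere. -/
theorem rotational_invariance_advective_flux
    (σ hσ Qθ Qφ nθ nφ : ℝ) (hσpos : 0 < σ) (hh : 0 < hσ)
    (hn : nθ ^ 2 + nφ ^ 2 = 1) :
    let δ : ℝ := Real.sqrt (nθ ^ 2 / σ ^ 2 + nφ ^ 2)
    let νθ : ℝ := nθ / (σ * δ)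
    let νφ : ℝ := nφ / δ
    let Rν : Matrix (Fin 3) (Fin 3) ℝ := !![1, 0, 0; 0, νθ, νφ; 0, -νφ, νθ]
    let w : Fin 3 → ℝ := ![hσ, Qθ, Qφ]
    let Fθ : Fin 3 → ℝ := ![Qθ / σ, Qθ ^ 2 / (hσ * σ), Qφ * Qθ / (hσ * σ)]
    let Fφ : Fin 3 → ℝ := ![Qφ, Qθ * Qφ / hσ, Qφ ^ 2 / hσ]
    let Fn : Fin 3 → ℝ := nθ • Fθ + nφ • Fφ
    let F : (Fin 3 → ℝ) → Fin 3 → ℝ := fun U =>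
      ![U 1, (U 1) ^ 2 / U 0, U 1 * U 2 / U 0]
    Rν.mulVec Fn = δ • F (Rν.mulVec w) := by
  intro δ νθ νφ Rν w Fθ Fφ Fn F
  have harg : 0 < nθ ^ 2 / σ ^ 2 + nφ ^ 2 := by
    rcases eq_or_ne nθ 0 with h | h
    · have : nφ ^ 2 = 1 := by rw [h] at hn; linarith
      positivity
    · have : 0 < nθ ^ 2 / σ ^ 2 := by positivity
      nlinarith [sq_nonneg nφ]
  have hδpos : 0 < δ := Real.sqrt_pos.mpr harg
  have hδ2 : δ ^ 2 = nθ ^ 2 / σ ^ 2 + nφ ^ 2 := Real.sq_sqrt harg.le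
  have hδ : δ ≠ 0 := hδpos.ne'
  have hσ0 : σ ≠ 0 := hσpos.ne'
  have hh0 : hσ ≠ 0 := hh.ne'
  have hδ2' : δ ^ 2 * σ ^ 2 = nθ ^ 2 + nφ ^ 2 * σ ^ 2 := by
    field_simp at hδ2; linarith
  funext i
  fin_cases i <;>
    simp [Rν, w, Fn, Fθ, Fφ, F, νθ, νφ, Matrix.mulVec, dotProduct,
      Fin.sum_univ_succ] <;>
    field_simp <;> ring
end

section
/- Let σ > 0, h_σ > 0, g > 0, and let n = (n_θ, n_φ) be a unit vector in ℝ². Define δ = √(n_θ²/σ² + n_φ²), ν = (n_θ/(σδ), n_φ/δ), the rotation matrix R_ν = [[1,0,0],[0,ν_θ,ν_φ],[0,−ν_φ,ν_θ]], the pressure terms T_θ^p(W) = (0, g h_σ/σ², 0)ᵀ, T_φ^p(W) = (0, 0, g h_σ/σ)ᵀ, T_n^p(W) = n_θ T_θ^p(W) + n_φ T_φ^p(W), and T^p(h) = (0, g h, 0)ᵀ. Then the rotational-invariance identity R_ν T_n^p(W) = δ T^p(h_σ/σ) holds. -/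
/-!
The normal direction `(n_θ / σ, n_φ)` has Euclidean length `δ`, so `ν` is its normalisation,
and `T_n^p(W) = (g h_σ / σ) δ (0, ν_θ, ν_φ)`. The rotation `R_ν` sends its own direction
`(0, ν_θ, ν_φ)` to `(0, ν_θ² + ν_φ², 0) = (0, 1, 0)`.
-/

theorem rotation_mulVec_smul_direction (a b c : ℝ) :
    (!![1, 0, 0; 0, a, b; 0, -b, a] : Matrix (Fin 3) (Fin 3) ℝ).mulVec ![0, c * a, c * b] =
      ![0, c * (a ^ 2 + b ^ 2), 0] := by
  ext i
  fin_cases i <;> simp [Matrix.mulVec, dotProduct, Fin.sum_univ_succ] <;> ring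

theorem div_sq_add_sq_pos {σ x y : ℝ} (hσ : σ ≠ 0) (hxy : x ≠ 0 ∨ y ≠ 0) :
    0 < x ^ 2 / σ ^ 2 + y ^ 2 := by
  rcases hxy with hx | hy
  · exact add_pos_of_pos_of_nonneg (by positivity) (sq_nonneg y)
  · exact add_pos_of_nonneg_of_pos (by positivity) (by positivity)

theorem div_sqrt_sq_add_div_sqrt_sq {a b : ℝ} (h : 0 < a ^ 2 + b ^ 2) :
    (a / √(a ^ 2 + b ^ 2)) ^ 2 + (b / √(a ^ 2 + b ^ 2)) ^ 2 = 1 := by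
  rw [div_pow, div_pow, ← add_div, Real.sq_sqrt h.le, div_self h.ne']

theorem rotational_invariance_pressure_term_general
    (σ hσ g nθ nφ : ℝ) (hσpos : 0 < σ)
    (hn : nθ ^ 2 + nφ ^ 2 = 1) :
    let δ : ℝ := Real.sqrt (nθ ^ 2 / σ ^ 2 + nφ ^ 2)
    let νθ : ℝ := nθ / (σ * δ)
    let νφ : ℝ := nφ / δ
    let Rν : Matrix (Fin 3) (Fin 3) ℝ := !![1, 0, 0; 0, νθ, νφ; 0, -νφ, νθ]
    let Tθ : Fin 3 → ℝ := ![0, g * hσ / σ ^ 2, 0]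
    let Tφ : Fin 3 → ℝ := ![0, 0, g * hσ / σ]
    let Tn : Fin 3 → ℝ := nθ • Tθ + nφ • Tφ
    let Tp : ℝ → Fin 3 → ℝ := fun h => ![0, g * h, 0]
    Rν.mulVec Tn = δ • Tp (hσ / σ) := by
  intro δ νθ νφ Rν Tθ Tφ Tn Tp
  have hσ0 : σ ≠ 0 := hσpos.ne'
  have hn0 : nθ ≠ 0 ∨ nφ ≠ 0 := by
    by_contra! h
    simp [h.1, h.2] at hn
  have hpos : 0 < nθ ^ 2 / σ ^ 2 + nφ ^ 2 := div_sq_add_sq_pos hσ0 hn0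
  have hδ : δ ≠ 0 := (Real.sqrt_pos.mpr hpos).ne'
  have hν : νθ ^ 2 + νφ ^ 2 = 1 := by
    have := div_sqrt_sq_add_div_sqrt_sq (a := nθ / σ) (b := nφ) (by rwa [div_pow])
    rwa [div_pow nθ σ, div_div] at this
  have hTn : Tn = ![0, g * hσ / σ * δ * νθ, g * hσ / σ * δ * νφ] := by
    ext i
    fin_cases i <;> simp [Tn, Tθ, Tφ, νθ, νφ] <;> field_simp
  calc Rν.mulVec Tn = ![0, g * hσ / σ * δ * (νθ ^ 2 + νφ ^ 2), 0] := by
        rw [hTn]; exact rotation_mulVec_smul_direction νθ νφ _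
    _ = δ • Tp (hσ / σ) := by
        rw [hν, mul_one]
        simp only [Tp, Matrix.smul_cons, Matrix.smul_empty, smul_eq_mul, mul_zero]
        congr 2
        ring

/-- rotational-invariance identity `R_ν T_n^p(W) = δ T^p(h_σ/σ)`
for the pressure terms of the shallow water system on the sphere. -/
theorem rotational_invariance_pressure_term
    (σ hσ g nθ nφ : ℝ) (hσpos : 0 < σ) (hh : 0 < hσ) (hg : 0 < g)
    (hn : nθ ^ 2 + nφ ^ 2 = 1) :
    let δ : ℝ := Real.sqrt (nθ ^ 2 / σ ^ 2 + nφ ^ 2)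
    let νθ : ℝ := nθ / (σ * δ)
    let νφ : ℝ := nφ / δ
    let Rν : Matrix (Fin 3) (Fin 3) ℝ := !![1, 0, 0; 0, νθ, νφ; 0, -νφ, νθ]
    let Tθ : Fin 3 → ℝ := ![0, g * hσ / σ ^ 2, 0]
    let Tφ : Fin 3 → ℝ := ![0, 0, g * hσ / σ]
    let Tn : Fin 3 → ℝ := nθ • Tθ + nφ • Tφ
    let Tp : ℝ → Fin 3 → ℝ := fun h => ![0, g * h, 0]
    Rν.mulVec Tn = δ • Tp (hσ / σ) :=
  rotational_invariance_pressure_term_general σ hσ g nθ nφ hσpos hn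
end

section
/- Fix g > 0, α > 0, v̄ ∈ ℝ, h₀ ∈ ℝ, and define on ℝ² (with r² = x²+y²): h(x,y) = h₀ − (v̄²/(4αg)) e^{2α(1−r²)}, u_x(x,y) = −v̄ e^{α(1−r²)} y, u_y(x,y) = v̄ e^{α(1−r²)} x, q_x = h u_x, q_y = h u_y. Assume h > 0 everywhere. Then (h, q_x, q_y), taken independent of time, is a stationary solution of the two-dimensional shallow water equations with flat bottom (H constant): ∂_x q_x + ∂_y q_y = 0, ∂_x(q_x²/h + (g/2)h²) + ∂_y(q_x q_y/h) = 0, and ∂_x(q_x q_y/h) + ∂_y(q_y²/h + (g/2)h²) = 0. -/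
/-!
Write `r² = x² + y²`. A vortex `h = H(r²)`, `u = W(r²) (-y, x)` has divergence-free mass flow,
since `h u` is a rotation field with radial amplitude. In the momentum equations the advective
terms reduce to the centripetal force `-h W² (x, y)` and the pressure terms to
`g h ∇h = 2 g h H' (x, y)`, so the vortex is steady as soon as it is in cyclostrophic balance
`2 g H' = W²`. For the Gaussian vortex `H' = 2 α (v̄² / (4 α g)) e^{2α(1-s)}` and
`W² = v̄² e^{2α(1-s)}`.
-/

open Real

def IsSteadyFlatShallowWater (g : ℝ) (h qx qy : ℝ → ℝ → ℝ) : Prop :=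
  ∀ x y : ℝ,
    (deriv (fun x' => qx x' y) x + deriv (fun y' => qy x y') y = 0) ∧
    (deriv (fun x' => (qx x' y) ^ 2 / h x' y + g / 2 * (h x' y) ^ 2) x +
        deriv (fun y' => qx x y' * qy x y' / h x y') y = 0) ∧
    (deriv (fun x' => qx x' y * qy x' y / h x' y) x +
        deriv (fun y' => (qy x y') ^ 2 / h x y' + g / 2 * (h x y') ^ 2) y = 0)

/-- Holds for `a = 0` too, through `0 / 0 = 0`. -/
theorem mul_mul_mul_div_self {K : Type*} [Field K] (a b c : K) :
    a * b * (a * c) / a = a * (b * c) := by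
  rcases eq_or_ne a 0 with rfl | ha
  · simp
  · field_simp

theorem mul_sq_div_self {K : Type*} [Field K] (a b : K) : (a * b) ^ 2 / a = a * b ^ 2 := by
  rw [sq, mul_mul_mul_div_self, sq]

section Radial

variable {F : ℝ → ℝ} {F' x y : ℝ}

theorem HasDerivAt.comp_add_sq_left (hF : HasDerivAt F F' (x ^ 2 + y ^ 2)) :
    HasDerivAt (fun t => F (t ^ 2 + y ^ 2)) (F' * (2 * x)) x :=
  (hF.comp x ((hasDerivAt_pow 2 x).add_const _)).congr_deriv (by norm_num)

theorem HasDerivAt.comp_add_sq_right (hF : HasDerivAt F F' (x ^ 2 + y ^ 2)) :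
    HasDerivAt (fun t => F (x ^ 2 + t ^ 2)) (F' * (2 * y)) y :=
  (hF.comp y ((hasDerivAt_pow 2 y).const_add _)).congr_deriv (by norm_num)

end Radial

section RadialVortex

variable (H W : ℝ → ℝ)

def vortexDepth (x y : ℝ) : ℝ := H (x ^ 2 + y ^ 2)

def vortexFlowX (x y : ℝ) : ℝ := vortexDepth H x y * (-(W (x ^ 2 + y ^ 2) * y))

def vortexFlowY (x y : ℝ) : ℝ := vortexDepth H x y * (W (x ^ 2 + y ^ 2) * x)

variable {H W} {g H' W' x y : ℝ}

theorem vortex_mass_conservation (hH : HasDerivAt H H' (x ^ 2 + y ^ 2))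
    (hW : HasDerivAt W W' (x ^ 2 + y ^ 2)) :
    deriv (fun x' => vortexFlowX H W x' y) x + deriv (fun y' => vortexFlowY H W x y') y = 0 := by
  have hX := hH.comp_add_sq_left.fun_mul (hW.comp_add_sq_left.mul_const y).fun_neg
  have hY := hH.comp_add_sq_right.fun_mul (hW.comp_add_sq_right.mul_const x)
  simp only [vortexFlowX, vortexFlowY, vortexDepth]
  rw [hX.deriv, hY.deriv]
  ring

theorem vortex_momentum_x (hH : HasDerivAt H H' (x ^ 2 + y ^ 2))
    (hW : HasDerivAt W W' (x ^ 2 + y ^ 2)) (hbal : 2 * g * H' = W (x ^ 2 + y ^ 2) ^ 2) :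
    deriv (fun x' => (vortexFlowX H W x' y) ^ 2 / vortexDepth H x' y +
        g / 2 * (vortexDepth H x' y) ^ 2) x +
      deriv (fun y' => vortexFlowX H W x y' * vortexFlowY H W x y' / vortexDepth H x y') y
        = 0 := by
  have hX := (hH.comp_add_sq_left.fun_mul ((hW.comp_add_sq_left.mul_const y).fun_neg.fun_pow 2)).fun_add
    ((hH.comp_add_sq_left.fun_pow 2).const_mul (g / 2))
  have hY := hH.comp_add_sq_right.fun_mul
    ((hW.comp_add_sq_right.fun_mul (hasDerivAt_id' y)).fun_neg.fun_mul
      (hW.comp_add_sq_right.mul_const x))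
  simp only [vortexFlowX, vortexFlowY, vortexDepth, mul_sq_div_self, mul_mul_mul_div_self]
  rw [hX.deriv, hY.deriv]
  linear_combination x * H (x ^ 2 + y ^ 2) * hbal

theorem vortex_momentum_y (hH : HasDerivAt H H' (x ^ 2 + y ^ 2))
    (hW : HasDerivAt W W' (x ^ 2 + y ^ 2)) (hbal : 2 * g * H' = W (x ^ 2 + y ^ 2) ^ 2) :
    deriv (fun x' => vortexFlowX H W x' y * vortexFlowY H W x' y / vortexDepth H x' y) x +
      deriv (fun y' => (vortexFlowY H W x y') ^ 2 / vortexDepth H x y' +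
        g / 2 * (vortexDepth H x y') ^ 2) y = 0 := by
  have hX := hH.comp_add_sq_left.fun_mul
    ((hW.comp_add_sq_left.mul_const y).fun_neg.fun_mul
      (hW.comp_add_sq_left.fun_mul (hasDerivAt_id' x)))
  have hY := (hH.comp_add_sq_right.fun_mul ((hW.comp_add_sq_right.mul_const x).fun_pow 2)).fun_add
    ((hH.comp_add_sq_right.fun_pow 2).const_mul (g / 2))
  simp only [vortexFlowX, vortexFlowY, vortexDepth, mul_sq_div_self, mul_mul_mul_div_self]
  rw [hX.deriv, hY.deriv]
  linear_combination y * H (x ^ 2 + y ^ 2) * hbal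

theorem isSteadyFlatShallowWater_vortex {H' : ℝ → ℝ} (hH : ∀ s, HasDerivAt H (H' s) s)
    (hW : Differentiable ℝ W) (hbal : ∀ s, 2 * g * H' s = W s ^ 2) :
    IsSteadyFlatShallowWater g (vortexDepth H) (vortexFlowX H W) (vortexFlowY H W) :=
  fun _ _ =>
    ⟨vortex_mass_conservation (hH _) (hW _).hasDerivAt,
      vortex_momentum_x (hH _) (hW _).hasDerivAt (hbal _),
      vortex_momentum_y (hH _) (hW _).hasDerivAt (hbal _)⟩

end RadialVortex

theorem hasDerivAt_const_sub_mul_exp (h₀ c κ s : ℝ) :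
    HasDerivAt (fun s => h₀ - c * exp (κ * (1 - s))) (c * κ * exp (κ * (1 - s))) s := by
  have hlin : HasDerivAt (fun s => κ * (1 - s)) (-κ) s := by
    simpa using ((hasDerivAt_id' s).const_sub 1).const_mul κ
  exact ((hlin.exp.const_mul c).const_sub h₀).congr_deriv (by ring)

theorem vortex_is_stationary_solution_general
    (g α vbar h₀ : ℝ) (hg : 0 < g) (hα : 0 < α) :
    let h : ℝ → ℝ → ℝ := fun x y =>
      h₀ - vbar ^ 2 / (4 * α * g) * Real.exp (2 * α * (1 - (x ^ 2 + y ^ 2)))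
    let qx : ℝ → ℝ → ℝ := fun x y =>
      h x y * (-(vbar * Real.exp (α * (1 - (x ^ 2 + y ^ 2))) * y))
    let qy : ℝ → ℝ → ℝ := fun x y =>
      h x y * (vbar * Real.exp (α * (1 - (x ^ 2 + y ^ 2))) * x)
    ∀ x y : ℝ,
      (deriv (fun x' => qx x' y) x + deriv (fun y' => qy x y') y = 0) ∧
      (deriv (fun x' => (qx x' y) ^ 2 / h x' y + g / 2 * (h x' y) ^ 2) x +
          deriv (fun y' => qx x y' * qy x y' / h x y') y = 0) ∧
      (deriv (fun x' => qx x' y * qy x' y / h x' y) x +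
          deriv (fun y' => (qy x y') ^ 2 / h x y' + g / 2 * (h x y') ^ 2) y
            = 0) := by
  intro h qx qy
  have hbal (s : ℝ) : 2 * g * (vbar ^ 2 / (4 * α * g) * (2 * α) * exp (2 * α * (1 - s))) =
      (vbar * exp (α * (1 - s))) ^ 2 := by
    rw [mul_pow, ← exp_nat_mul]
    field_simp
    ring_nf
  exact isSteadyFlatShallowWater_vortex
    (fun s => hasDerivAt_const_sub_mul_exp h₀ (vbar ^ 2 / (4 * α * g)) (2 * α) s)
    (by fun_prop) hbal

/-- the smooth vortex
`h = h₀ − (v̄²/(4αg)) e^{2α(1−r²)}`, `u = v̄ e^{α(1−r²)} (−y, x)`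
is a stationary solution of the two-dimensional shallow water equations with a
flat bottom. -/
theorem vortex_is_stationary_solution
    (g α vbar h₀ : ℝ) (hg : 0 < g) (hα : 0 < α)
    (hpos : ∀ x y : ℝ,
      0 < h₀ - vbar ^ 2 / (4 * α * g) *
        Real.exp (2 * α * (1 - (x ^ 2 + y ^ 2)))) :
    let h : ℝ → ℝ → ℝ := fun x y =>
      h₀ - vbar ^ 2 / (4 * α * g) * Real.exp (2 * α * (1 - (x ^ 2 + y ^ 2)))
    let qx : ℝ → ℝ → ℝ := fun x y =>
      h x y * (-(vbar * Real.exp (α * (1 - (x ^ 2 + y ^ 2))) * y))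
    let qy : ℝ → ℝ → ℝ := fun x y =>
      h x y * (vbar * Real.exp (α * (1 - (x ^ 2 + y ^ 2))) * x)
    ∀ x y : ℝ,
      (deriv (fun x' => qx x' y) x + deriv (fun y' => qy x y') y = 0) ∧
      (deriv (fun x' => (qx x' y) ^ 2 / h x' y + g / 2 * (h x' y) ^ 2) x +
          deriv (fun y' => qx x y' * qy x y' / h x y') y = 0) ∧
      (deriv (fun x' => qx x' y * qy x' y / h x' y) x +
          deriv (fun y' => (qy x y') ^ 2 / h x y' + g / 2 * (h x y') ^ 2) y
            = 0) :=
  vortex_is_stationary_solution_general g α vbar h₀ hg hα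
end
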